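/- Let (K, K⁰) be a normed category and u a sequence in K satisfying condition (U). Then u is Fraïssé if and only if it satisfies condition (B): for every ε > 0, every n, and every K⁰-arrow f : u_n → y with μ(f) < +∞, there exist m > n and a K⁰-arrow g : y → u_m such that μ(g) < ε and ρ(g∘f, u_n^m) < μ(f) + ε. -/

import Mathlib

open CategoryTheory

universe u v

/-- A category enriched over metric spaces: each hom-set carries an (extended) metric `ρ`
such that composition is non-expansive on both sides. -/
structure MetricEnrichment (C : Type u) [Category.{v} C] where
  ρ : ∀ {a b : C}, (a ⟶ b) → (a ⟶ b) → ENNReal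
  ρ_self : ∀ {a b : C} (f : a ⟶ b), ρ f f = 0
  eq_of_ρ_eq_zero : ∀ {a b : C} {f g : a ⟶ b}, ρ f g = 0 → f = g
  ρ_comm : ∀ {a b : C} (f g : a ⟶ b), ρ f g = ρ g f
  ρ_triangle : ∀ {a b : C} (f g h : a ⟶ b), ρ f h ≤ ρ f g + ρ g h
  precomp_nonexpansive : ∀ {a b c : C} (g : a ⟶ b) (f₀ f₁ : b ⟶ c),
    ρ (g ≫ f₀) (g ≫ f₁) ≤ ρ f₀ f₁
  postcomp_nonexpansive : ∀ {a b c : C} (f₀ f₁ : a ⟶ b) (h : b ⟶ c),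
    ρ (f₀ ≫ h) (f₁ ≫ h) ≤ ρ f₀ f₁

/-- A (wide) subcategory with the same objects, given by a class of arrows containing
identities and closed under composition. -/
structure WideSubcat (C : Type u) [Category.{v} C] where
  mem : ∀ {a b : C}, (a ⟶ b) → Prop
  id_mem : ∀ a : C, mem (𝟙 a)
  comp_mem : ∀ {a b c : C} {f : a ⟶ b} {g : b ⟶ c}, mem f → mem g → mem (f ≫ g)

/-- The norm `μ(f) = inf { ρ(j ∘ f, i) : i, j ∈ K compatible }` of an arrow of the big
category, induced by the pair (K, K⁰). -/
noncomputable def normOf {C : Type u} [Category.{v} C] (M : MetricEnrichment C)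
    (K : WideSubcat C) {a b : C} (f : a ⟶ b) : ENNReal :=
  ⨅ (c : C) (i : a ⟶ c) (j : b ⟶ c) (_ : K.mem i) (_ : K.mem j), M.ρ (f ≫ j) i

/-- A sequence in the subcategory `K`: a functor from `(ℕ, ≤)` to `C` whose bonding
arrows all belong to `K`. -/
structure KSeq (C : Type u) [Category.{v} C] (K : WideSubcat C) where
  obj : ℕ → C
  map : ∀ ⦃n m : ℕ⦄, n ≤ m → (obj n ⟶ obj m)
  map_id : ∀ n : ℕ, map (le_refl n) = 𝟙 (obj n)
  map_comp : ∀ {n m k : ℕ} (h1 : n ≤ m) (h2 : m ≤ k),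
    map (h1.trans h2) = map h1 ≫ map h2
  mem : ∀ {n m : ℕ} (h : n ≤ m), K.mem (map h)

/-- Condition (U): every `K`-object admits arrows of arbitrarily small norm into the
sequence. -/
def CondU {C : Type u} [Category.{v} C] (M : MetricEnrichment C) (K : WideSubcat C)
    (u : KSeq C K) : Prop :=
  ∀ (x : C) (ε : ENNReal), 0 < ε → ∃ (n : ℕ) (f : x ⟶ u.obj n), normOf M K f < ε

/-- Condition (A): given `ε > 0` and a `K`-arrow `f : u_n → y`, there are `m > n` and
`g : y → u_m` with `μ(g) < ε` and `ρ(u_n^m, g ∘ f) < ε`. -/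
def CondA {C : Type u} [Category.{v} C] (M : MetricEnrichment C) (K : WideSubcat C)
    (u : KSeq C K) : Prop :=
  ∀ (ε : ENNReal), 0 < ε → ∀ (n : ℕ) (y : C) (f : u.obj n ⟶ y), K.mem f →
    ∃ (m : ℕ) (hnm : n < m) (g : y ⟶ u.obj m),
      normOf M K g < ε ∧ M.ρ (u.map hnm.le) (f ≫ g) < ε

/-- A Fraïssé sequence: conditions (U) and (A). -/
def IsFraisse {C : Type u} [Category.{v} C] (M : MetricEnrichment C) (K : WideSubcat C)
    (u : KSeq C K) : Prop :=
  CondU M K u ∧ CondA M K u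

/-- Condition (B): for every `ε > 0`, every `n` and every `K⁰`-arrow `f : u_n → y` of
finite norm, there are `m > n` and `g : y → u_m` with `μ(g) < ε` and
`ρ(g ∘ f, u_n^m) < μ(f) + ε`. -/
def CondB {C : Type u} [Category.{v} C] (M : MetricEnrichment C) (K : WideSubcat C)
    (u : KSeq C K) : Prop :=
  ∀ (ε : ENNReal), 0 < ε → ∀ (n : ℕ) (y : C) (f : u.obj n ⟶ y), normOf M K f < ⊤ →
    ∃ (m : ℕ) (hnm : n < m) (g : y ⟶ u.obj m),
      normOf M K g < ε ∧ M.ρ (f ≫ g) (u.map hnm.le) < normOf M K f + ε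

/-!
(A) ⇒ (B): if `μ(f) < ∞`, pick `K`-arrows `i, j` with `ρ(j ∘ f, i) < μ(f) + ε/2` and apply (A)
to the `K`-arrow `i`, getting `g'` with `ρ(g' ∘ i, u_n^m) < ε/2`. Then `g = g' ∘ j` works:
precomposing with the `K`-arrow `j` does not increase the norm, and the triangle inequality
through `g' ∘ i` gives `ρ(g ∘ f, u_n^m) < μ(f) + ε`.
(B) ⇒ (A): arrows of `K` have norm `0`, so (B) specialises to (A).
-/

section

variable {C : Type u} [Category.{v} C] (M : MetricEnrichment C) (K : WideSubcat C)

theorem MetricEnrichment.ρ_comp_comp_le {a b c d : C} (f : a ⟶ b) (j : b ⟶ c) (i : a ⟶ c)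
    (g : c ⟶ d) (h : a ⟶ d) : M.ρ (f ≫ j ≫ g) h ≤ M.ρ (f ≫ j) i + M.ρ (i ≫ g) h := by
  calc M.ρ (f ≫ j ≫ g) h ≤ M.ρ ((f ≫ j) ≫ g) (i ≫ g) + M.ρ (i ≫ g) h := by
        rw [Category.assoc]; exact M.ρ_triangle _ _ _
    _ ≤ M.ρ (f ≫ j) i + M.ρ (i ≫ g) h := by gcongr; exact M.postcomp_nonexpansive _ _ _

theorem normOf_le {a b c : C} (f : a ⟶ b) {i : a ⟶ c} {j : b ⟶ c} (hi : K.mem i)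
    (hj : K.mem j) : normOf M K f ≤ M.ρ (f ≫ j) i :=
  iInf_le_of_le c <| iInf_le_of_le i <| iInf_le_of_le j <| iInf_le_of_le hi <| iInf_le _ hj

theorem normOf_lt_iff {a b : C} (f : a ⟶ b) (r : ENNReal) :
    normOf M K f < r ↔ ∃ (c : C) (i : a ⟶ c) (j : b ⟶ c),
      K.mem i ∧ K.mem j ∧ M.ρ (f ≫ j) i < r := by
  simp only [normOf, iInf_lt_iff, exists_prop]

theorem normOf_eq_zero_of_mem {a b : C} {f : a ⟶ b} (hf : K.mem f) : normOf M K f = 0 :=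
  nonpos_iff_eq_zero.mp <| by
    simpa [M.ρ_self] using normOf_le M K f hf (K.id_mem b)

theorem normOf_comp_le_of_mem {a b c : C} {j : a ⟶ b} (hj : K.mem j) (g : b ⟶ c) :
    normOf M K (j ≫ g) ≤ normOf M K g := by
  refine le_iInf fun d => le_iInf fun i => le_iInf fun k => le_iInf fun hi => le_iInf fun hk => ?_
  calc normOf M K (j ≫ g) ≤ M.ρ ((j ≫ g) ≫ k) (j ≫ i) := normOf_le M K _ (K.comp_mem hj hi) hk
    _ ≤ M.ρ (g ≫ k) i := by rw [Category.assoc]; exact M.precomp_nonexpansive j _ _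

variable {M K} {u : KSeq C K}

theorem condB_of_condA (hA : CondA M K u) : CondB M K u := by
  intro ε hε n y f hf
  have hε2 : 0 < ε / 2 := ENNReal.half_pos hε.ne'
  obtain ⟨c, i, j, hi, hj, hfji⟩ :=
    (normOf_lt_iff M K f _).mp (ENNReal.lt_add_right hf.ne hε2.ne')
  obtain ⟨m, hnm, g', hg', hig'⟩ := hA (ε / 2) hε2 n c i hi
  refine ⟨m, hnm, j ≫ g', ?_, ?_⟩
  · exact (normOf_comp_le_of_mem M K hj g').trans_lt (hg'.trans_le ENNReal.half_le_self)
  · calc M.ρ (f ≫ j ≫ g') (u.map hnm.le)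
        ≤ M.ρ (f ≫ j) i + M.ρ (i ≫ g') (u.map hnm.le) := M.ρ_comp_comp_le f j i g' _
      _ < (normOf M K f + ε / 2) + ε / 2 := ENNReal.add_lt_add hfji (M.ρ_comm _ _ ▸ hig')
      _ = normOf M K f + ε := by rw [add_assoc, ENNReal.add_halves]

theorem condA_of_condB (hB : CondB M K u) : CondA M K u := by
  intro ε hε n y f hf
  have hf0 : normOf M K f = 0 := normOf_eq_zero_of_mem M K hf
  obtain ⟨m, hnm, g, hg, hfg⟩ := hB ε hε n y f (hf0 ▸ ENNReal.zero_lt_top)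
  exact ⟨m, hnm, g, hg, M.ρ_comm _ _ ▸ by simpa [hf0] using hfg⟩

end

/-- For a sequence satisfying (U), being Fraïssé is equivalent to condition (B). -/
theorem stmt9 {C : Type u} [Category.{v} C] (M : MetricEnrichment C) (K : WideSubcat C)
    (u : KSeq C K) (hU : CondU M K u) :
    IsFraisse M K u ↔ CondB M K u :=
  ⟨fun h => condB_of_condA h.2, fun hB => ⟨hU, condA_of_condB hB⟩⟩
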